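/- Let N ≥ 2 and C ≥ 1 be integers and let ζ := ζ_N = exp(2πi/N). Then ∑_{k=1}^{N−1} 2(ζ^{C k} − 1)/(1 − ζ^{−k})² = ∑_{s=1}^{C} (N − 1 − 2·[s]_N). -/
import Mathlib

/-- `ζ_N = exp(2πi/N)`. -/
noncomputable def zeta (N : ℕ) : ℂ := Complex.exp (2 * Real.pi * Complex.I / N)

open Finset

lemma zeta_prim (N : ℕ) (hN : 2 ≤ N) : IsPrimitiveRoot (zeta N) N := by
  have h : (N:ℕ) ≠ 0 := by omega
  simpa [zeta] using Complex.isPrimitiveRoot_exp N h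

lemma zeta_pow_ne_one (N : ℕ) (hN : 2 ≤ N) {k : ℕ} (hk1 : 1 ≤ k) (hk2 : k ≤ N - 1) :
    zeta N ^ k ≠ 1 :=
  (zeta_prim N hN).pow_ne_one_of_pos_of_lt (by omega) (by omega)

lemma zeta_ne_zero (N : ℕ) : zeta N ≠ 0 := Complex.exp_ne_zero _

lemma geo (N : ℕ) (hN : 2 ≤ N) (j : ℕ) :
    ∑ k ∈ Icc 1 (N-1), zeta N ^ (j * k)
      = if N ∣ j then (N:ℂ) - 1 else -1 := by
  have hprim := zeta_prim N hN
  have hIcc : Finset.Icc 1 (N-1) = Finset.Ico 1 N := by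
    rw [← Finset.Ico_add_one_right_eq_Icc]; congr 1; omega
  by_cases hdvd : N ∣ j
  · have h1 : zeta N ^ j = 1 := (hprim.pow_eq_one_iff_dvd j).2 hdvd
    rw [if_pos hdvd]
    have hcongr : ∀ k ∈ Icc 1 (N-1), zeta N ^ (j * k) = 1 := by
      intro k _; rw [pow_mul, h1, one_pow]
    rw [Finset.sum_congr rfl hcongr, Finset.sum_const, Nat.card_Icc]
    have : N - 1 + 1 - 1 = N - 1 := by omega
    rw [this, nsmul_eq_mul, mul_one, Nat.cast_sub (by omega), Nat.cast_one]
  · rw [if_neg hdvd]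
    set x := zeta N ^ j with hx
    have hx1 : x ≠ 1 := fun h => hdvd ((hprim.pow_eq_one_iff_dvd j).1 h)
    have hxN : x ^ N = 1 := by
      rw [hx, ← pow_mul, mul_comm, pow_mul, hprim.pow_eq_one, one_pow]
    have hsum : ∑ k ∈ Finset.range N, x ^ k = 0 := by
      rw [geom_sum_eq hx1, hxN, sub_self, zero_div]
    have hsplit : ∑ k ∈ Finset.range N, x ^ k
        = x ^ 0 + ∑ k ∈ Finset.Ico 1 N, x ^ k := by
      rw [Finset.range_eq_Ico]
      exact Finset.sum_eq_sum_Ico_succ_bot (by omega) _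
    have : ∑ k ∈ Finset.Ico 1 N, x ^ k = -1 := by
      rw [hsplit, pow_zero] at hsum; linear_combination hsum
    rw [hIcc]
    calc ∑ k ∈ Finset.Ico 1 N, zeta N ^ (j * k)
        = ∑ k ∈ Finset.Ico 1 N, x ^ k := by
          refine Finset.sum_congr rfl fun k _ => ?_
          rw [hx, ← pow_mul]
      _ = -1 := this

lemma T1 (N : ℕ) (hN : 2 ≤ N) :
    ∑ k ∈ Icc 1 (N-1), zeta N ^ k / (zeta N ^ k - 1) = ((N:ℂ) - 1)/2 := by
  set f : ℕ → ℂ := fun k => zeta N ^ k / (zeta N ^ k - 1) with hf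
  have hIcc : Finset.Icc 1 (N-1) = Finset.Ico 1 N := by
    rw [← Finset.Ico_add_one_right_eq_Icc]; congr 1; omega
  have hS : ∑ k ∈ Icc 1 (N-1), f k = ∑ i ∈ Finset.range (N-1), f (1 + i) := by
    rw [hIcc, Finset.sum_Ico_eq_sum_range]
  have hS' : ∑ k ∈ Icc 1 (N-1), f k = ∑ i ∈ Finset.range (N-1), f (N - 1 - i) := by
    rw [hS, ← Finset.sum_range_reflect]
    refine Finset.sum_congr rfl fun i hi => ?_
    simp only [Finset.mem_range] at hi
    congr 1; omega
  have hpair : ∀ i ∈ Finset.range (N-1), f (1 + i) + f (N - 1 - i) = 1 := by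
    intro i hi
    simp only [Finset.mem_range] at hi
    set x := zeta N ^ (1 + i) with hx
    set y := zeta N ^ (N - 1 - i) with hy
    have hxy : x * y = 1 := by
      rw [hx, hy, ← pow_add]
      have : 1 + i + (N - 1 - i) = N := by omega
      rw [this, (zeta_prim N hN).pow_eq_one]
    have hx1 : x ≠ 1 := zeta_pow_ne_one N hN (by omega) (by omega)
    have hy1 : y ≠ 1 := zeta_pow_ne_one N hN (by omega) (by omega)
    have key : ∀ u v : ℂ, u * v = 1 → u - 1 ≠ 0 → v - 1 ≠ 0 →
        u / (u - 1) + v / (v - 1) = 1 := by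
      intro u v huv hu hv
      have hu0 : u ≠ 0 := left_ne_zero_of_mul_eq_one huv
      have hv' : v = u⁻¹ := eq_inv_of_mul_eq_one_right huv
      subst hv'
      rw [div_add_div _ _ hu hv]
      rw [div_eq_one_iff_eq (mul_ne_zero hu hv)]
      field_simp
      ring
    exact key x y hxy (sub_ne_zero.2 hx1) (sub_ne_zero.2 hy1)
  have h2 : (∑ k ∈ Icc 1 (N-1), f k) + (∑ k ∈ Icc 1 (N-1), f k)
      = ((N:ℂ) - 1) := by
    nth_rewrite 1 [hS]
    rw [hS', ← Finset.sum_add_distrib, Finset.sum_congr rfl hpair,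
      Finset.sum_const, Finset.card_range, nsmul_eq_mul, mul_one,
      Nat.cast_sub (by omega), Nat.cast_one]
  have := h2
  field_simp
  linear_combination this

lemma Tclosed (N : ℕ) (hN : 2 ≤ N) : ∀ m, 1 ≤ m →
    ∑ k ∈ Icc 1 (N-1), zeta N ^ (m * k) / (zeta N ^ k - 1)
      = ((N:ℂ) - 1)/2 - (((m-1) % N : ℕ) : ℂ) := by
  intro m hm
  induction m, hm using Nat.le_induction with
  | base => simpa using T1 N hN
  | succ m hm ih =>
    have hsplit : ∑ k ∈ Icc 1 (N-1), zeta N ^ ((m+1) * k) / (zeta N ^ k - 1)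
        = (∑ k ∈ Icc 1 (N-1), zeta N ^ (m * k) / (zeta N ^ k - 1))
          + ∑ k ∈ Icc 1 (N-1), zeta N ^ (m * k) := by
      rw [← Finset.sum_add_distrib]
      refine Finset.sum_congr rfl fun k hk => ?_
      simp only [Finset.mem_Icc] at hk
      have hk1 : zeta N ^ k - 1 ≠ 0 :=
        sub_ne_zero.2 (zeta_pow_ne_one N hN hk.1 hk.2)
      have hpow : zeta N ^ ((m+1) * k) = zeta N ^ (m * k) * zeta N ^ k := by
        rw [← pow_add]; ring_nf
      field_simp [hpow]; ring
    rw [hsplit, ih, geo N hN m]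
    by_cases hdvd : N ∣ m
    · rw [if_pos hdvd]
      have h1 : m % N = 0 := by
        obtain ⟨q, hq⟩ := hdvd
        simp [hq, Nat.mul_mod_right]
      have h2 : (m + 1 - 1) % N = 0 := by simpa using h1
      obtain ⟨q, hq⟩ := hdvd
      rcases q with _ | q'
      · omega
      have h3 : (m - 1) % N = N - 1 := by
        have hm' : m - 1 = N * q' + (N - 1) := by
          have : m = N * q' + N := by rw [hq]; ring
          omega
        rw [hm', Nat.mul_add_mod]
        exact Nat.mod_eq_of_lt (by omega)
      rw [h2, h3, Nat.cast_sub (by omega)]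
      push_cast; ring
    · rw [if_neg hdvd]
      have h1 : m % N ≠ 0 := fun h => hdvd (Nat.dvd_of_mod_eq_zero h)
      have h2 : (m - 1) % N + 1 < N ∨ (m - 1) % N + 1 = N := by
        have := Nat.mod_lt (m-1) (show 0 < N by omega); omega
      have hm1 : m = (m - 1) + 1 := by omega
      have hmod : m % N = ((m - 1) % N + 1) % N := by
        conv_lhs => rw [hm1]
        rw [Nat.add_mod, Nat.one_mod_eq_one.2 (by omega)]
      rcases h2 with h2 | h2
      · have h3 : m % N = (m - 1) % N + 1 := by
          rw [hmod, Nat.mod_eq_of_lt h2]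
        have h4 : (m + 1 - 1) % N = (m - 1) % N + 1 := by simpa using h3
        rw [h4]
        push_cast; ring
      · exfalso
        apply h1
        rw [hmod, h2, Nat.mod_self]

/-- For integers `N ≥ 2` and `C ≥ 1`, with `ζ := ζ_N = exp(2πi/N)`,
`∑_{k=1}^{N-1} 2(ζ^(Ck) - 1)/(1 - ζ⁻ᵏ)² = ∑_{s=1}^{C} (N - 1 - 2·[s]_N)`. -/
theorem stmt_2 (N : ℕ) (hN : 2 ≤ N) (C : ℕ) (hC : 1 ≤ C) :
    ∑ k ∈ Finset.Icc 1 (N - 1), 2 * (zeta N ^ (C * k) - 1) / (1 - (zeta N)⁻¹ ^ k) ^ 2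
      = ∑ s ∈ Finset.Icc 1 C, ((N : ℂ) - 1 - 2 * ((s % N : ℕ) : ℂ)) := by
  clear hC
  induction C with
  | zero => simp
  | succ C ih =>
    have hsplit : ∑ k ∈ Finset.Icc 1 (N - 1),
          2 * (zeta N ^ ((C+1) * k) - 1) / (1 - (zeta N)⁻¹ ^ k) ^ 2
        = (∑ k ∈ Finset.Icc 1 (N - 1),
            2 * (zeta N ^ (C * k) - 1) / (1 - (zeta N)⁻¹ ^ k) ^ 2)
          + ∑ k ∈ Finset.Icc 1 (N-1), 2 * (zeta N ^ ((C+2) * k) / (zeta N ^ k - 1)) := by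
      rw [← Finset.sum_add_distrib]
      refine Finset.sum_congr rfl fun k hk => ?_
      simp only [Finset.mem_Icc] at hk
      set x := zeta N ^ k with hx
      have hx0 : x ≠ 0 := pow_ne_zero _ (zeta_ne_zero N)
      have hx1 : x - 1 ≠ 0 := sub_ne_zero.2 (zeta_pow_ne_one N hN hk.1 hk.2)
      have hinv : (zeta N)⁻¹ ^ k = x⁻¹ := by rw [inv_pow]
      have hinv1 : 1 - x⁻¹ ≠ 0 := by
        rw [sub_ne_zero]
        intro h
        apply hx1
        rw [sub_eq_zero, ← inv_inv x, ← h, inv_one]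
      have hp1 : zeta N ^ ((C+1) * k) = zeta N ^ (C * k) * x := by
        rw [hx, ← pow_add]; ring_nf
      have hp2 : zeta N ^ ((C+2) * k) = zeta N ^ (C * k) * x ^ 2 := by
        rw [hx, ← pow_mul, ← pow_add]; ring_nf
      rw [hinv, hp1, hp2]
      set a := zeta N ^ (C * k)
      field_simp
      ring
    rw [hsplit, ih, ← Finset.mul_sum, Tclosed N hN (C+2) (by omega),
      Finset.sum_Icc_succ_top (by omega : 1 ≤ C + 1)]
    have : (C + 2 - 1) % N = (C + 1) % N := by congr 1
    rw [this]
    ring
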